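/- Let B be a 𝔹ℂ-convex, 𝔹ℂ-balanced, 𝔹ℂ-absorbing subset of a 𝔹ℂ-module X. Then the hyperbolic-valued Minkowski functional q_B(x) = inf_𝔻 {α >' 0 : x ∈ αB} is a 𝔻-valued seminorm on X, i.e., q_B(x+y) ≤' q_B(x) + q_B(y) and q_B(λx) = |λ|_k q_B(x) for all λ ∈ 𝔹ℂ. -/

import Mathlib

noncomputable section

abbrev BC : Type := ℂ × ℂ
abbrev Hyp : Type := ℝ × ℝ

def BC.e1 : BC := (1, 0)
def BC.e2 : BC := (0, 1)

def normK (z : BC) : Hyp := (‖z.1‖, ‖z.2‖)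

def hypToBC (l : Hyp) : BC := ((l.1 : ℂ), (l.2 : ℂ))

def embedC (c : ℂ) : BC := (c, c)

def ltH (a b : Hyp) : Prop := a.1 < b.1 ∧ a.2 < b.2

def absH (a : Hyp) : Hyp := (|a.1|, |a.2|)

def BCBalanced {X : Type*} [AddCommGroup X] [Module BC X] (B : Set X) : Prop :=
  ∀ l : BC, normK l ≤ 1 → ∀ x ∈ B, l • x ∈ B

def BCConvex {X : Type*} [AddCommGroup X] [Module BC X] (B : Set X) : Prop :=
  ∀ x ∈ B, ∀ y ∈ B, ∀ l : Hyp, 0 ≤ l → l ≤ 1 →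
    hypToBC l • x + hypToBC (1 - l) • y ∈ B

def BCAbsorbing {X : Type*} [AddCommGroup X] [Module BC X] (B : Set X) : Prop :=
  ∀ x : X, ∃ ε : Hyp, (0 < ε.1 ∧ 0 < ε.2) ∧
    ∀ l : Hyp, 0 ≤ l → l ≤ ε → hypToBC l • x ∈ B

def CxConvex {X : Type*} [AddCommGroup X] [Module BC X] (S : Set X) : Prop :=
  ∀ x ∈ S, ∀ y ∈ S, ∀ t : ℝ, 0 ≤ t → t ≤ 1 →
    embedC (t : ℂ) • x + embedC ((1 - t : ℝ) : ℂ) • y ∈ S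

def idemSum {X : Type*} [AddCommGroup X] [Module BC X] (B : Set X) : Set X :=
  Set.image2 (fun b b' => BC.e1 • b + BC.e2 • b') B B

def IsDSeminorm {X : Type*} [AddCommGroup X] [Module BC X] (p : X → Hyp) : Prop :=
  (∀ l : BC, ∀ x : X, p (l • x) = normK l * p x) ∧
  (∀ x y : X, p (x + y) ≤ p x + p y)

def gaugeD {X : Type*} [AddCommGroup X] [Module BC X] (B : Set X) (x : X) : Hyp :=
  (sInf (Prod.fst '' {α : Hyp | (0 < α.1 ∧ 0 < α.2) ∧ x ∈ (fun b => hypToBC α • b) '' B}),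
   sInf (Prod.snd '' {α : Hyp | (0 < α.1 ∧ 0 < α.2) ∧ x ∈ (fun b => hypToBC α • b) '' B}))

/-!
Since `e₁ + e₂ = 1` and `e₁ B + e₂ B ⊆ B` (the case `λ = e₁` of `𝔹ℂ`-convexity), the condition
`x ∈ α B` splits into the independent conditions `e₁ x ∈ α₁ e₁ B` and `e₂ x ∈ α₂ e₂ B`. Hence the
`i`-th idempotent component of `q_B` is the classical Minkowski functional of
`{y | eᵢ y ∈ eᵢ B}`, where `X` is viewed as a complex vector space through the diagonal
`ℂ → 𝔹ℂ`. This set is convex, balanced and absorbing, so subadditivity and homogeneity follow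
from those of real gauges, `|λ|_k` entering through `eᵢ λ = eᵢ λᵢ`.
-/

open Set Pointwise

theorem Balanced.restrictScalars {𝕜 𝕝 E : Type*} [SeminormedRing 𝕜] [SeminormedRing 𝕝]
    [NormOneClass 𝕝] [Module 𝕜 𝕝] [NormSMulClass 𝕜 𝕝] [MulAction 𝕝 E] [SMul 𝕜 E]
    [IsScalarTower 𝕜 𝕝 E] {s : Set E} (hs : Balanced 𝕝 s) : Balanced 𝕜 s := by
  intro a ha
  rw [← smul_one_smul 𝕝 a s]
  exact hs _ (by rwa [norm_smul, norm_one, mul_one])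

theorem e1_mul_hypToBC (α : Hyp) : BC.e1 * hypToBC α = algebraMap ℝ BC α.1 * BC.e1 := by
  ext <;> simp [BC.e1, hypToBC]

theorem e2_mul_hypToBC (α : Hyp) : BC.e2 * hypToBC α = algebraMap ℝ BC α.2 * BC.e2 := by
  ext <;> simp [BC.e2, hypToBC]

theorem e1_add_e2 : BC.e1 + BC.e2 = 1 := by
  ext <;> simp [BC.e1, BC.e2]

section BCModule

variable {X : Type*} [AddCommGroup X] [Module BC X]

-- For `X = BC` these instances are not reducibly defeq to the product ones, so scalars from `ℝ`
-- or `ℂ` acting on `BC` itself are written through `algebraMap` below.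
instance : Module ℝ X := Module.compHom X (algebraMap ℝ BC)
instance : Module ℂ X := Module.compHom X (algebraMap ℂ BC)
instance : IsScalarTower ℝ BC X := .of_algebraMap_smul fun _ _ => rfl
instance : IsScalarTower ℂ BC X := .of_algebraMap_smul fun _ _ => rfl
instance : IsScalarTower ℝ ℂ X := .of_algebraMap_smul fun _ _ => rfl

variable {B : Set X}

theorem BCBalanced.balanced_complex (hbal : BCBalanced B) : Balanced ℂ B := fun c hc =>
  smul_set_subset_iff.2 fun x hx => hbal (algebraMap ℂ BC c) ⟨hc, hc⟩ x hx

theorem BCConvex.convex (hconv : BCConvex B) : Convex ℝ B := by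
  intro x hx y hy a b ha hb hab
  obtain rfl : b = 1 - a := by linarith
  exact hconv x hx y hy (a, a) ⟨ha, ha⟩ ⟨show a ≤ 1 by linarith, show a ≤ 1 by linarith⟩

theorem BCConvex.idemSum_subset (hconv : BCConvex B) : idemSum B ⊆ B :=
  image2_subset_iff.2 fun b hb b' hb' => by
    convert hconv b hb b' hb' (1, 0) (by simp [Prod.le_def]) (by simp [Prod.le_def]) using 3 <;>
      ext <;> simp [BC.e1, BC.e2, hypToBC]

theorem BCAbsorbing.absorbent (habs : BCAbsorbing B) (hB : Balanced ℝ B) : Absorbent ℝ B := by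
  refine absorbent_iff_eventually_nhdsNE_zero.2 fun x => ?_
  obtain ⟨ε, ⟨hε₁, hε₂⟩, hε⟩ := habs x
  set m := min ε.1 ε.2
  have hm : 0 < m := lt_min hε₁ hε₂
  have hmx : m • x ∈ B := hε (m, m) ⟨hm.le, hm.le⟩ ⟨min_le_left _ _, min_le_right _ _⟩
  filter_upwards [nhdsWithin_le_nhds (Metric.ball_mem_nhds 0 hm)] with c hc
  refine hB.smul_mem_mono hmx ?_
  rw [Real.norm_of_nonneg hm.le]
  exact (mem_ball_zero_iff.1 hc).le

def componentSet (e : BC) (B : Set X) : Set X := (e • ·) ⁻¹' (e • B)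

section componentSet

variable (e : BC)

theorem subset_componentSet : B ⊆ componentSet e B := fun _ hb => smul_mem_smul_set hb

theorem Convex.componentSet (hB : Convex ℝ B) : Convex ℝ (componentSet e B) :=
  (hB.linear_image (DistribSMul.toLinearMap ℝ X e)).linear_preimage
    (DistribSMul.toLinearMap ℝ X e)

theorem Balanced.componentSet (hB : Balanced ℂ B) : Balanced ℂ (componentSet e B) :=
  (hB.smul e).mulActionHom_preimage (DistribSMul.toLinearMap ℂ X e).toMulActionHom

theorem Absorbent.componentSet (hB : Absorbent ℝ B) : Absorbent ℝ (componentSet e B) :=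
  hB.mono (subset_componentSet e)

theorem mem_smul_componentSet_iff {r : ℝ} (hr : r ≠ 0) {x : X} :
    x ∈ r • componentSet e B ↔ e • x ∈ r • e • B := by
  rw [mem_smul_set_iff_inv_smul_mem₀ hr, mem_smul_set_iff_inv_smul_mem₀ hr, smul_comm]
  rfl

theorem gauge_componentSet_congr {x y : X} (h : e • x = e • y) :
    gauge (componentSet e B) x = gauge (componentSet e B) y := by
  unfold gauge
  congr 1
  ext r
  refine and_congr_right fun hr => ?_
  rw [mem_smul_componentSet_iff e hr.ne', mem_smul_componentSet_iff e hr.ne', h]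

theorem gauge_componentSet_smul (hB : Balanced ℂ B) {l : BC} {c : ℂ}
    (h : e * l = e * algebraMap ℂ BC c) (x : X) :
    gauge (componentSet e B) (l • x) = ‖c‖ * gauge (componentSet e B) x := by
  rw [gauge_componentSet_congr e (y := c • x) (by rw [smul_smul, h, mul_smul, algebraMap_smul]),
    gauge_smul (hB.componentSet e)]

end componentSet

theorem mem_hypToBC_smul_iff (hB : idemSum B ⊆ B) {α : Hyp}
    (hα₁ : α.1 ≠ 0) (hα₂ : α.2 ≠ 0) {x : X} :
    x ∈ hypToBC α • B ↔ x ∈ α.1 • componentSet BC.e1 B ∧ x ∈ α.2 • componentSet BC.e2 B := by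
  rw [mem_smul_componentSet_iff _ hα₁, mem_smul_componentSet_iff _ hα₂]
  constructor
  · rintro ⟨b, hb, rfl⟩
    rw [smul_smul, smul_smul, e1_mul_hypToBC, e2_mul_hypToBC, mul_smul, mul_smul]
    exact ⟨smul_mem_smul_set (smul_mem_smul_set hb), smul_mem_smul_set (smul_mem_smul_set hb)⟩
  · rintro ⟨⟨_, ⟨b, hb, rfl⟩, h₁⟩, ⟨_, ⟨b', hb', rfl⟩, h₂⟩⟩
    refine ⟨BC.e1 • b + BC.e2 • b', hB (mem_image2_of_mem hb hb'), ?_⟩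
    calc hypToBC α • (BC.e1 • b + BC.e2 • b')
        = α.1 • BC.e1 • b + α.2 • BC.e2 • b' := by
          rw [smul_add, smul_smul, smul_smul, mul_comm (hypToBC α), e1_mul_hypToBC,
            mul_comm (hypToBC α), e2_mul_hypToBC, mul_smul, mul_smul]
          rfl
      _ = BC.e1 • x + BC.e2 • x := congrArg₂ (· + ·) h₁ h₂
      _ = x := by rw [← add_smul, e1_add_e2, one_smul]

theorem gaugeD_eq_gauge_componentSet (hB : idemSum B ⊆ B) (hB_abs : Absorbent ℝ B) (x : X) :
    gaugeD B x = (gauge (componentSet BC.e1 B) x, gauge (componentSet BC.e2 B) x) := by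
  have hsplit : {α : Hyp | (0 < α.1 ∧ 0 < α.2) ∧ x ∈ (fun b => hypToBC α • b) '' B} =
      {r | 0 < r ∧ x ∈ r • componentSet BC.e1 B} ×ˢ
        {r | 0 < r ∧ x ∈ r • componentSet BC.e2 B} := by
    ext α
    simp only [image_smul, mem_ofPred_eq, mem_prod]
    constructor
    · rintro ⟨⟨h₁, h₂⟩, hx⟩
      obtain ⟨hx₁, hx₂⟩ := (mem_hypToBC_smul_iff hB h₁.ne' h₂.ne').1 hx
      exact ⟨⟨h₁, hx₁⟩, h₂, hx₂⟩
    · rintro ⟨⟨h₁, hx₁⟩, h₂, hx₂⟩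
      exact ⟨⟨h₁, h₂⟩, (mem_hypToBC_smul_iff hB h₁.ne' h₂.ne').2 ⟨hx₁, hx₂⟩⟩
  unfold gaugeD gauge
  rw [hsplit, fst_image_prod _ (hB_abs.componentSet _).gauge_set_nonempty,
    snd_image_prod (hB_abs.componentSet _).gauge_set_nonempty]

end BCModule

theorem gaugeD_isDSeminorm {X : Type*} [AddCommGroup X] [Module BC X] (B : Set X)
    (hconv : BCConvex B) (hbal : BCBalanced B) (habs : BCAbsorbing B) :
    (∀ x y : X, gaugeD B (x + y) ≤ gaugeD B x + gaugeD B y) ∧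
    (∀ l : BC, ∀ x : X, gaugeD B (l • x) = normK l * gaugeD B x) := by
  have hB_conv : Convex ℝ B := hconv.convex
  have hB_bal : Balanced ℂ B := hbal.balanced_complex
  have hB_abs : Absorbent ℝ B := habs.absorbent hB_bal.restrictScalars
  simp only [gaugeD_eq_gauge_componentSet hconv.idemSum_subset hB_abs]
  refine ⟨fun x y => ⟨?_, ?_⟩, fun l x => ?_⟩
  · exact gauge_add_le (hB_conv.componentSet _) (hB_abs.componentSet _) x y
  · exact gauge_add_le (hB_conv.componentSet _) (hB_abs.componentSet _) x y
  · rw [gauge_componentSet_smul _ hB_bal (c := l.1) (by ext <;> simp [BC.e1]),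
      gauge_componentSet_smul _ hB_bal (c := l.2) (by ext <;> simp [BC.e2])]
    rfl
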